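/- Let E ⊆ Z^n be a d-sparse set and M a rank-(d+1) paving matroid on E. Let P be the Z^n-invariant d-partition of Z^n generated by the hyperplanes of M (all translates of hyperplanes, together with all d-subsets not contained in any translate). Then the blocks of P meeting E in at least d elements are exactly the hyperplanes of M; equivalently, the restriction to E of the paving matroid on Z^n determined by P equals M. -/

import Mathlib

open Set Matroid

variable {n : ℕ}

/-- A circuit of a matroid: a minimal dependent set. -/
def Matroid.IsCircuit' {α : Type*} (M : Matroid α) (C : Set α) : Prop :=
  M.Dep C ∧ ∀ D, M.Dep D → D ⊆ C → D = C

/-- The rank of a matroid, as an extended natural number. -/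
noncomputable def Matroid.eRank' {α : Type*} (M : Matroid α) : ℕ∞ :=
  ⨆ B ∈ {B | M.IsBase B}, B.encard

/-- A hyperplane of a finite-rank matroid: a maximal subset of the ground set
of rank `rank M - 1`. -/
def Matroid.IsHyperplane {α : Type*} (M : Matroid α) (H : Set α) : Prop :=
  H ⊆ M.E ∧ (M ↾ H).eRank' + 1 = M.eRank' ∧
    ∀ H', H ⊂ H' → H' ⊆ M.E → (M ↾ H').eRank' + 1 ≠ M.eRank'

/-- The translate `u + S` of a subset `S ⊆ ℤⁿ`. -/
def ztranslate (u : Fin n → ℤ) (S : Set (Fin n → ℤ)) : Set (Fin n → ℤ) :=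
  (fun x => u + x) '' S

/-- A subset `S ⊆ ℤⁿ` is `d`-sparse if `|S ∩ (u + S)| < d` for every nonzero
`u ∈ ℤⁿ`. -/
def ZSparse (d : ℕ) (S : Set (Fin n → ℤ)) : Prop :=
  ∀ u : Fin n → ℤ, u ≠ 0 → (S ∩ ztranslate u S).encard < d

/-! A nonzero translate of a hyperplane `H ⊆ E` meets `E` inside `E ∩ (u + E)`, which has fewer
than `d` points by sparsity; so among the translates only the hyperplanes themselves meet `E` in
`d` points. A `d`-set meeting `E` in `d` points lies in `E`, is independent because every circuit
of the paving matroid has more than `d` elements, and therefore lies in its closure, a hyperplane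
(it has rank `d` in a matroid of rank `d + 1`); so no block of the second kind qualifies. -/

namespace Matroid

variable {α : Type*} {M : Matroid α} {C X H : Set α} {d : ℕ}

theorem isCircuit'_iff : M.IsCircuit' C ↔ M.IsCircuit C := by
  rw [IsCircuit', isCircuit_def, minimal_iff]
  exact and_congr_right fun _ =>
    ⟨fun h D hD hDC => (h D hD hDC).symm, fun h D hD hDC => (h hD hDC).symm⟩

theorem eRank'_eq_eRank (M : Matroid α) : M.eRank' = M.eRank := by
  obtain ⟨B, hB⟩ := M.exists_isBase
  refine le_antisymm (iSup₂_le fun B' hB' => hB'.encard_eq_eRank.le) ?_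
  exact hB.encard_eq_eRank ▸ le_iSup₂_of_le B hB le_rfl

theorem isHyperplane_iff : M.IsHyperplane H ↔ H ⊆ M.E ∧ M.eRk H + 1 = M.eRank ∧
    ∀ H', H ⊂ H' → H' ⊆ M.E → M.eRk H' + 1 ≠ M.eRank := by
  simp only [IsHyperplane, eRank'_eq_eRank, eRank_restrict]

theorem IsHyperplane.eRk_eq (hH : M.IsHyperplane H) (hM : M.eRank = d + 1) : M.eRk H = d :=
  WithTop.add_right_cancel ENat.one_ne_top ((isHyperplane_iff.1 hH).2.1.trans hM)

theorem IsHyperplane.le_encard (hH : M.IsHyperplane H) (hM : M.eRank = d + 1) :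
    (d : ℕ∞) ≤ H.encard :=
  hH.eRk_eq hM ▸ M.eRk_le_encard H

theorem isHyperplane_closure (hX : M.eRk X + 1 = M.eRank) (hXfin : M.eRk X ≠ ⊤) :
    M.IsHyperplane (M.closure X) := by
  refine isHyperplane_iff.2 ⟨M.closure_subset_ground X, by rwa [eRk_closure_eq], ?_⟩
  intro H' hXH' hH'E hH'
  obtain ⟨e, heH', heX⟩ := exists_of_ssubset hXH'
  have hle : M.eRk X + 1 ≤ M.eRk H' := by
    rw [← eRk_closure_eq, ← eRk_insert_eq_add_one ⟨hH'E heH', by rwa [closure_closure]⟩]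
    exact M.eRk_mono (insert_subset heH' hXH'.subset)
  have hH'X : M.eRk H' = M.eRk X := WithTop.add_right_cancel ENat.one_ne_top (hH'.trans hX.symm)
  rw [hH'X] at hle
  exact lt_irrefl _ ((ENat.add_one_le_iff hXfin).1 hle)

theorem indep_of_encard_le (hgirth : ∀ C, M.IsCircuit C → (d : ℕ∞) < C.encard)
    (hXE : X ⊆ M.E) (hXd : X.encard ≤ d) : M.Indep X := by
  by_contra hX
  obtain ⟨C, hCX, hC⟩ := (not_indep_iff hXE).1 hX |>.exists_isCircuit_subset
  exact (hgirth C hC).not_ge ((encard_mono hCX).trans hXd)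

end Matroid

theorem Set.Finite.subset_of_encard_le_encard_inter {α : Type*} {S T : Set α} (hS : S.Finite)
    (h : S.encard ≤ (S ∩ T).encard) : S ⊆ T :=
  inter_eq_left.1 (hS.eq_of_subset_of_encard_le' inter_subset_left h)

theorem ztranslate_zero (S : Set (Fin n → ℤ)) : ztranslate 0 S = S := by
  simp [ztranslate]

theorem ZSparse.encard_ztranslate_inter_lt {d : ℕ} {E H : Set (Fin n → ℤ)} {u : Fin n → ℤ}
    (hE : ZSparse d E) (hu : u ≠ 0) (hH : H ⊆ E) : (ztranslate u H ∩ E).encard < d :=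
  (encard_mono fun _ hx => mem_inter hx.2 (image_mono hH hx.1)).trans_lt (hE u hu)

/-- Let `E ⊆ ℤⁿ` be `d`-sparse and `M` a rank-`(d+1)` paving matroid on `E`.
In the `ℤⁿ`-invariant `d`-partition generated by the hyperplanes of `M` (all
translates of hyperplanes together with all `d`-subsets contained in no
translate), the blocks meeting `E` in at least `d` elements are exactly the
hyperplanes of `M`; hence the restriction to `E` of the associated paving
matroid on `ℤⁿ` equals `M`. -/
theorem generated_partition_restricts_to_hyperplanes (d : ℕ)
    (E : Set (Fin n → ℤ)) (hE : ZSparse d E) (M : Matroid (Fin n → ℤ))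
    (hME : M.E = E) (hrank : M.eRank' = d + 1)
    (hpaving : ∀ C, M.IsCircuit' C → C.encard = d + 1 ∨ C.encard = d + 2) :
    {S ∈ ({T | ∃ u : Fin n → ℤ, ∃ H, M.IsHyperplane H ∧ T = ztranslate u H} ∪
          {D : Set (Fin n → ℤ) | D.encard = d ∧ ∀ u : Fin n → ℤ, ∀ H,
            M.IsHyperplane H → ¬ D ⊆ ztranslate u H}) |
        (d : ℕ∞) ≤ (S ∩ E).encard} =
      {H | M.IsHyperplane H} := by
  subst hME
  have hM : M.eRank = d + 1 := M.eRank'_eq_eRank ▸ hrank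
  have hcirc : ∀ C, M.IsCircuit C → (d : ℕ∞) < C.encard := fun C hC => by
    rcases hpaving C (isCircuit'_iff.2 hC) with h | h <;> rw [h] <;> norm_cast <;> omega
  ext S
  simp only [mem_union, mem_ofPred_eq]
  refine ⟨?_, fun hS => ⟨Or.inl ⟨0, S, hS, (ztranslate_zero S).symm⟩, ?_⟩⟩
  · rintro ⟨⟨u, H, hH, rfl⟩ | ⟨hSd, hS⟩, hcard⟩
    · obtain rfl | hu := eq_or_ne u 0
      · rwa [ztranslate_zero]
      · exact absurd hcard (hE.encard_ztranslate_inter_lt hu hH.1).not_ge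
    · have hSE : S ⊆ M.E :=
        (finite_of_encard_eq_coe hSd).subset_of_encard_le_encard_inter (hSd ▸ hcard)
      have hSr : M.eRk S = d := by
        rw [(indep_of_encard_le hcirc hSE hSd.le).eRk_eq_encard, hSd]
      refine absurd ?_ (hS 0 _ (isHyperplane_closure (by rw [hSr, hM]) (by simp [hSr])))
      rw [ztranslate_zero]
      exact M.subset_closure S hSE
  · rw [inter_eq_self_of_subset_left hS.1]
    exact hS.le_encard hM
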